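/- arXiv:0903.3065 — 2 statements merged into one kernel-verified Lean document; each statement's English description precedes it below -/
import Mathlib

section
/- Let W be the Weierstrass curve over the ring ℤ[[q]] with coefficients a₁ = 1, a₂ = 0, a₃ = 0, a₄ = −5s₃(q), a₆ = −(5s₃(q) + 7s₅(q))/12, where sₖ(q) ∈ ℤ[[q]] is the power series whose n-th coefficient is σₖ(n) for n ≥ 1 and whose constant term is 0 (the division by 12 being exact coefficientwise). Then the coefficient of q¹ in the discriminant Δ of W equals 1; in particular Δ ≠ 0 in ℤ[[q]], so the Weierstrass equation y² + xy = x³ + a₄x + a₆ defines an elliptic curve over any field containing ℤ[[q]]. -/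
open PowerSeries

lemma coeff_one_mul_eq_zero (f g : PowerSeries ℤ)
    (hf : PowerSeries.constantCoeff f = 0)
    (hg : PowerSeries.constantCoeff g = 0) :
    PowerSeries.coeff 1 (f * g) = 0 := by
  rw [PowerSeries.coeff_mul, Finset.Nat.sum_antidiagonal_eq_sum_range_succ_mk]
  simp [Finset.sum_range_succ, PowerSeries.coeff_zero_eq_constantCoeff, hf, hg]

/-- Let `W` be the Weierstrass curve over `ℤ[[q]]` with coefficients
`a₁ = 1`, `a₂ = 0`, `a₃ = 0`, `a₄ = −5s₃(q)`, `a₆ = −(5s₃(q) + 7s₅(q))/12`,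
where `sₖ(q) ∈ ℤ[[q]]` has `n`-th coefficient `σₖ(n)` for `n ≥ 1` and constant
term `0`, and the division by `12` is exact coefficientwise (i.e. `a₆` is the
power series with `12·a₆ = −(5s₃ + 7s₅)`).  Then the coefficient of `q¹` in the
discriminant `Δ` of `W` is `1`; in particular `Δ ≠ 0` in `ℤ[[q]]`. -/
theorem tate_curve_discriminant_coeff_one
    (s : ℕ → PowerSeries ℤ)
    (hs_coeff : ∀ k, ∀ n : ℕ, 1 ≤ n →
      PowerSeries.coeff n (s k) = (ArithmeticFunction.sigma k n : ℤ))
    (hs_const : ∀ k, PowerSeries.constantCoeff (s k) = 0)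
    (a6 : PowerSeries ℤ)
    (ha6 : 12 * a6 = -(5 * s 3 + 7 * s 5))
    (W : WeierstrassCurve (PowerSeries ℤ))
    (hW : W = ⟨1, 0, 0, -5 * s 3, a6⟩) :
    PowerSeries.coeff 1 W.Δ = 1 ∧ W.Δ ≠ 0 := by
  set a4 : PowerSeries ℤ := -5 * s 3 with ha4
  have hc4 : PowerSeries.constantCoeff a4 = 0 := by
    simp [ha4, hs_const]
  have h12 : (12 : PowerSeries ℤ) = PowerSeries.C 12 := by
    norm_num
  have hc6 : PowerSeries.constantCoeff a6 = 0 := by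
    have := congrArg (PowerSeries.constantCoeff) ha6
    rw [h12] at this
    simp only [map_mul, PowerSeries.constantCoeff_C, map_neg, map_add, hs_const] at this
    linarith
  have hΔ : W.Δ = -a6 + a4 ^ 2 - 64 * a4 ^ 3 - 432 * a6 ^ 2 + 72 * (a4 * a6) := by
    rw [hW]
    simp only [WeierstrassCurve.Δ, WeierstrassCurve.b₂, WeierstrassCurve.b₄,
      WeierstrassCurve.b₆, WeierstrassCurve.b₈]
    ring
  have h2 : PowerSeries.coeff 1 (a4 ^ 2) = 0 := by
    rw [sq]; exact coeff_one_mul_eq_zero _ _ hc4 hc4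
  have h3 : PowerSeries.coeff 1 (64 * a4 ^ 3) = 0 := by
    rw [show (64 : PowerSeries ℤ) * a4 ^ 3 = 64 * a4 ^ 2 * a4 by ring]
    exact coeff_one_mul_eq_zero _ _ (by simp [map_mul, hc4]) hc4
  have h6 : PowerSeries.coeff 1 (432 * a6 ^ 2) = 0 := by
    rw [show (432 : PowerSeries ℤ) * a6 ^ 2 = 432 * a6 * a6 by ring]
    exact coeff_one_mul_eq_zero _ _ (by simp [map_mul, hc6]) hc6
  have h46 : PowerSeries.coeff 1 (72 * (a4 * a6)) = 0 := by
    rw [show (72 : PowerSeries ℤ) * (a4 * a6) = 72 * a4 * a6 by ring]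
    exact coeff_one_mul_eq_zero _ _ (by simp [map_mul, hc4]) hc6
  have hc6one : PowerSeries.coeff 1 a6 = -1 := by
    have := congrArg (PowerSeries.coeff 1) ha6
    rw [h12, show (5 : PowerSeries ℤ) = PowerSeries.C 5 from by norm_num,
      show (7 : PowerSeries ℤ) = PowerSeries.C 7 from by norm_num] at this
    simp only [PowerSeries.coeff_C_mul, map_neg, map_add,
      hs_coeff 3 1 le_rfl, hs_coeff 5 1 le_rfl] at this
    simp [ArithmeticFunction.sigma_apply] at this
    linarith
  have key : PowerSeries.coeff 1 W.Δ = 1 := by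
    rw [hΔ]
    simp [h2, h3, h6, h46, hc6one]
  exact ⟨key, fun h => by simp [h] at key⟩
end

section
/- The Novikov set N = { f ∈ HahnSeries ℝ ℂ : for every real number T, the set { t ∈ support(f) : t ≤ T } is finite } is a subfield of the field of Hahn series over ℂ with value group ℝ: it contains 0 and 1 and is closed under addition, negation, multiplication, and inversion of nonzero elements. (This subfield is the Novikov field Λ_ℝ of formal sums Σᵢ aᵢ q^{tᵢ} with aᵢ ∈ ℂ, aᵢ = 0 for i ≪ 0, tᵢ ∈ ℝ, tᵢ → ∞.) -/
open HahnSeries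

private abbrev Nov (f : HahnSeries ℝ ℂ) : Prop :=
  ∀ T : ℝ, {t ∈ f.support | t ≤ T}.Finite

private lemma nov_of_subset {f : HahnSeries ℝ ℂ} {s : Set ℝ} (hs : s.Finite)
    (h : f.support ⊆ s) : Nov f :=
  fun _ => hs.subset (fun t ht => h ht.1)

private lemma nov_zero : Nov (0 : HahnSeries ℝ ℂ) :=
  nov_of_subset Set.finite_empty (by simp [support])

private lemma nov_single (a : ℝ) (r : ℂ) : Nov (single a r) :=
  nov_of_subset (Set.finite_singleton a) support_single_subset

private lemma nov_one : Nov (1 : HahnSeries ℝ ℂ) := by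
  rw [← single_zero_one]; exact nov_single 0 1

private lemma nov_add {f g : HahnSeries ℝ ℂ} (hf : Nov f) (hg : Nov g) : Nov (f + g) := by
  intro T
  refine ((hf T).union (hg T)).subset ?_
  rintro t ⟨ht, hT⟩
  rcases support_add_subset f g ht with h | h
  · exact Or.inl ⟨h, hT⟩
  · exact Or.inr ⟨h, hT⟩

private lemma nov_neg {f : HahnSeries ℝ ℂ} (hf : Nov f) : Nov (-f) := by
  intro T; rw [support_neg]; exact hf T

private lemma nov_mul {f g : HahnSeries ℝ ℂ} (hf : Nov f) (hg : Nov g) : Nov (f * g) := by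
  rcases eq_or_ne f 0 with rfl | hf0
  · rw [zero_mul]; exact nov_zero
  rcases eq_or_ne g 0 with rfl | hg0
  · rw [mul_zero]; exact nov_zero
  intro T
  refine (Set.Finite.image2 (· + ·) (hf (T - g.order)) (hg (T - f.order))).subset ?_
  rintro t ⟨ht, hT⟩
  obtain ⟨a, ha, b, hb, rfl⟩ := support_mul_subset ht
  have hT' : a + b ≤ T := hT
  exact Set.mem_image2_of_mem ⟨ha, by
      have := order_le_of_coeff_ne_zero hb; linarith⟩
    ⟨hb, by have := order_le_of_coeff_ne_zero ha; linarith⟩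

private lemma nov_pow {f : HahnSeries ℝ ℂ} (hf : Nov f) (n : ℕ) : Nov (f ^ n) := by
  induction n with
  | zero => simpa using nov_one
  | succ n ih => rw [pow_succ]; exact nov_mul ih hf

private lemma nov_hsum_powers {x : HahnSeries ℝ ℂ} (hx : 0 < x.orderTop) (hn : Nov x) :
    Nov (SummableFamily.powers x).hsum := by
  rcases eq_or_ne x 0 with rfl | hx0
  · refine nov_of_subset (Set.finite_singleton 0) ?_
    intro t ht
    obtain ⟨s, ⟨n, rfl⟩, hts⟩ := SummableFamily.support_hsum_subset ht
    have hts' : t ∈ ((0 : HahnSeries ℝ ℂ) ^ n).support := by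
      simpa only [SummableFamily.powers_of_orderTop_pos hx] using hts
    rcases Nat.eq_zero_or_pos n with rfl | hnpos
    · rw [pow_zero, support_one] at hts'; exact hts'
    · rw [zero_pow hnpos.ne', support_zero] at hts'; exact absurd hts' (Set.notMem_empty t)
  · have hε : 0 < x.order := by
      have h := order_eq_orderTop_of_ne_zero hx0
      rw [← h] at hx
      exact WithTop.coe_pos.mp hx
    intro T
    obtain ⟨M, hM⟩ := exists_nat_gt (T / x.order)
    have hMT : T < M * x.order := by
      rw [div_lt_iff₀ hε] at hM; linarith
    refine (Set.Finite.biUnion (Set.finite_Iio (M : ℕ))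
      (fun n _ => nov_pow hn n T)).subset ?_
    rintro t ⟨ht, hT⟩
    obtain ⟨s, ⟨n, rfl⟩, hts⟩ := SummableFamily.support_hsum_subset ht
    have hts' : t ∈ (x ^ n).support := by
      simpa only [SummableFamily.powers_of_orderTop_pos hx] using hts
    refine Set.mem_biUnion (show n ∈ Set.Iio M from ?_) ⟨hts', hT⟩
    by_contra hnM
    rw [Set.mem_Iio, not_lt] at hnM
    have h1 : (x ^ n).order ≤ t := order_le_of_coeff_ne_zero hts'
    rw [order_pow] at h1
    have h2 : (M : ℝ) * x.order ≤ (n : ℝ) * x.order := by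
      have : (M : ℝ) ≤ n := by exact_mod_cast hnM
      exact mul_le_mul_of_nonneg_right this hε.le
    simp only [nsmul_eq_mul] at h1
    linarith

private lemma nov_inv {f : HahnSeries ℝ ℂ} (hf : Nov f) (hf0 : f ≠ 0) : Nov f⁻¹ := by
  have hlc : (f.leadingCoeff)⁻¹ * f.leadingCoeff = 1 :=
    inv_mul_cancel₀ (leadingCoeff_ne_zero.mpr hf0)
  have hx : 0 < (1 - single (-f.order) (f.leadingCoeff)⁻¹ * f).orderTop := unit_aux f hlc _ (neg_add_cancel f.order)
  have hxnov : Nov (1 - single (-f.order) (f.leadingCoeff)⁻¹ * f) := by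
    rw [sub_eq_add_neg]
    exact nov_add nov_one (nov_neg (nov_mul (nov_single _ _) hf))
  have key : f * (single (-f.order) (f.leadingCoeff)⁻¹ *
      (SummableFamily.powers (1 - single (-f.order) (f.leadingCoeff)⁻¹ * f)).hsum) = 1 := by
    have h := SummableFamily.one_sub_self_mul_hsum_powers hx
    rw [sub_sub_cancel] at h
    rw [← mul_assoc, mul_comm f, h]
  rw [inv_eq_of_mul_eq_one_right key]
  exact nov_mul (nov_single _ _) (nov_hsum_powers hx hxnov)

/-- The Novikov set `N = { f ∈ HahnSeries ℝ ℂ : ∀ T, { t ∈ support f : t ≤ T } is finite }`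
is a subfield of the field of Hahn series over `ℂ` with value group `ℝ`: it contains
`0` and `1` and is closed under addition, negation, multiplication, and inversion of
nonzero elements.  This subfield is the Novikov field `Λ_ℝ` of formal sums
`Σᵢ aᵢ q^{tᵢ}` with `aᵢ ∈ ℂ`, `aᵢ = 0` for `i ≪ 0`, `tᵢ ∈ ℝ`, `tᵢ → ∞`. -/
theorem novikov_set_is_subfield
    (N : Set (HahnSeries ℝ ℂ))
    (hN : N = {f : HahnSeries ℝ ℂ | ∀ T : ℝ, {t ∈ f.support | t ≤ T}.Finite}) :
    (0 : HahnSeries ℝ ℂ) ∈ N ∧ (1 : HahnSeries ℝ ℂ) ∈ N ∧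
      (∀ f ∈ N, ∀ g ∈ N, f + g ∈ N) ∧
      (∀ f ∈ N, -f ∈ N) ∧
      (∀ f ∈ N, ∀ g ∈ N, f * g ∈ N) ∧
      (∀ f ∈ N, f ≠ 0 → f⁻¹ ∈ N) ∧
      ∃ K : Subfield (HahnSeries ℝ ℂ), (K : Set (HahnSeries ℝ ℂ)) = N := by
  subst hN
  refine ⟨nov_zero, nov_one, fun f hf g hg => nov_add hf hg, fun f hf => nov_neg hf,
    fun f hf g hg => nov_mul hf hg, fun f hf h0 => nov_inv hf h0, ?_⟩
  refine ⟨{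
    carrier := {f : HahnSeries ℝ ℂ | ∀ T : ℝ, {t ∈ f.support | t ≤ T}.Finite}
    zero_mem' := nov_zero
    one_mem' := nov_one
    add_mem' := fun hf hg => nov_add hf hg
    neg_mem' := fun hf => nov_neg hf
    mul_mem' := fun hf hg => nov_mul hf hg
    inv_mem' := fun f hf => by
      rcases eq_or_ne f 0 with rfl | h0
      · simpa using nov_zero
      · exact nov_inv hf h0 }, rfl⟩
end
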